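/- The number of rooted d-ary trees with k internal nodes equals the Fuss–Catalan number C_k^{(d)} = (1/(k(d-1)+1)) * binomial(dk, k), for all d ≥ 2 and k ≥ 0. -/

import Mathlib

/-!
Count forests rather than trees. In an ordered forest of `m + 1` trees with `k + 1` internal
nodes, the first tree is either a leaf, leaving a forest of `m` trees with `k + 1` internal nodes,
or a node whose `d` subtrees join the other `m` trees into a forest of `d + m` trees with `k`
internal nodes. So the forest counts obey `R(m + 1, k + 1) = R(m, k + 1) + R(d + m, k)`,
`R(m, 0) = 1`, `R(0, k + 1) = 0`, and by Pascal's rule so do the Raney numbers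
`m / (d k + m) * C(d k + m, k)`. For `m = 1` these are the Fuss–Catalan numbers.
-/

/-- A rooted `d`-ary tree: either a leaf, or an internal node with an ordered
`d`-tuple of rooted `d`-ary subtrees. -/
inductive DAryTree (d : ℕ) : Type
  | leaf : DAryTree d
  | node : (Fin d → DAryTree d) → DAryTree d

namespace DAryTree

/-- The number of internal nodes of a rooted `d`-ary tree. -/
def internal {d : ℕ} : DAryTree d → ℕ
  | .leaf => 0
  | .node c => 1 + ∑ i : Fin d, internal (c i)

end DAryTree

def raney (d : ℕ) : ℕ → ℕ → ℕ
  | _, 0 => 1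
  | 0, _ + 1 => 0
  | m + 1, k + 1 => raney d m (k + 1) + raney d (d + m) k
termination_by m k => (k, m)

theorem raney_mul_eq_mul_choose {d : ℕ} (hd : 0 < d) (m k : ℕ) :
    raney d m k * (d * k + m) = m * (d * k + m).choose k := by
  induction m, k using raney.induct d with
  | case1 m => simp [raney]
  | case2 k => simp [raney]
  | case3 m k ih₁ ih₂ =>
    set N := d * k + d + m with hN
    have hN_pos : 0 < N := by positivity
    have hkN : k ≤ N := (Nat.le_mul_of_pos_left k hd).trans (by omega)
    rw [show d * (k + 1) + m = N by ring] at ih₁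
    rw [show d * k + (d + m) = N by ring] at ih₂
    rw [raney, show d * (k + 1) + (m + 1) = N + 1 by ring, Nat.choose_succ_succ]
    have choose_succ := Nat.choose_succ_right_eq N k
    refine Nat.eq_of_mul_eq_mul_left hN_pos ?_
    zify [hkN] at *
    linear_combination (↑N + 1 : ℤ) * ih₁ + (↑N + 1 : ℤ) * ih₂ - (d : ℤ) * choose_succ
      - ((N.choose k : ℤ) + N.choose (k + 1)) * hN

theorem raney_one_mul_eq_choose {d : ℕ} (hd : 0 < d) (k : ℕ) :
    raney d 1 k * (k * (d - 1) + 1) = (d * k).choose k := by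
  have hk : d * k + 1 - k = k * (d - 1) + 1 := by
    have : k ≤ d * k := Nat.le_mul_of_pos_left k hd
    rw [Nat.mul_sub_one, Nat.mul_comm k d]
    omega
  refine Nat.eq_of_mul_eq_mul_left (Nat.succ_pos (d * k)) ?_
  calc (d * k + 1) * (raney d 1 k * (k * (d - 1) + 1))
      = raney d 1 k * (d * k + 1) * (d * k + 1 - k) := by rw [hk]; ring
    _ = (d * k + 1).choose k * (d * k + 1 - k) := by rw [raney_mul_eq_mul_choose hd, one_mul]
    _ = (d * k + 1) * (d * k).choose k := by
      rw [← Nat.choose_succ_right_eq, Nat.add_one_mul_choose_eq]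

namespace DAryTree

variable {d : ℕ}

abbrev Forest (d m k : ℕ) : Type := {f : Fin m → DAryTree d // ∑ i, (f i).internal = k}

theorem eq_leaf_of_internal_eq_zero {t : DAryTree d} (ht : t.internal = 0) : t = leaf := by
  cases t with
  | leaf => rfl
  | node c => simp [internal] at ht

instance (m : ℕ) : Unique (Forest d m 0) where
  default := ⟨fun _ => leaf, by simp [internal]⟩
  uniq f := Subtype.ext <| funext fun i =>
    eq_leaf_of_internal_eq_zero <| Finset.sum_eq_zero_iff.mp f.2 i (Finset.mem_univ i)

instance (k : ℕ) : IsEmpty (Forest d 0 (k + 1)) :=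
  ⟨fun f => by simpa using f.2⟩

def consLeafOrNode {m : ℕ} :
    (Fin m → DAryTree d) ⊕ (Fin (d + m) → DAryTree d) ≃ (Fin (m + 1) → DAryTree d) where
  toFun
    | .inl g => Fin.cons leaf g
    | .inr g => Fin.cons (node fun i => g (Fin.castAdd m i)) fun j => g (Fin.natAdd d j)
  invFun f :=
    match f 0 with
    | leaf => .inl (Fin.tail f)
    | node c => .inr (Fin.append c (Fin.tail f))
  left_inv
    | .inl g => by simp
    | .inr g => by simp [Fin.append_castAdd_natAdd]
  right_inv f := by
    conv_rhs => rw [← Fin.cons_self_tail f]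
    cases h : f 0 <;> simp [h]

theorem sum_internal_consLeafOrNode {m : ℕ}
    (s : (Fin m → DAryTree d) ⊕ (Fin (d + m) → DAryTree d)) :
    ∑ i, (consLeafOrNode s i).internal =
      s.elim (fun g => ∑ i, (g i).internal) (fun g => ∑ i, (g i).internal + 1) := by
  rcases s with g | g
  · simp [consLeafOrNode, Fin.sum_univ_succ, internal]
  · simp [consLeafOrNode, Fin.sum_univ_succ, internal, Fin.sum_univ_add]
    ring

def forestSuccEquiv (m k : ℕ) :
    Forest d m (k + 1) ⊕ Forest d (d + m) k ≃ Forest d (m + 1) (k + 1) :=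
  (Equiv.sumCongr
      (Equiv.subtypeEquivRight fun _ => by rw [sum_internal_consLeafOrNode]; rfl)
      (Equiv.subtypeEquivRight fun _ => by rw [sum_internal_consLeafOrNode]; simp)).trans
    (Equiv.subtypeSum.symm.trans (consLeafOrNode.subtypeEquiv fun _ => Iff.rfl))

theorem enatCard_forest (m k : ℕ) : ENat.card (Forest d m k) = raney d m k := by
  induction m, k using raney.induct d with
  | case1 m => simp [raney]
  | case2 k => simp [raney]
  | case3 m k ih₁ ih₂ =>
    rw [← ENat.card_congr (forestSuccEquiv m k), ENat.card_sum, ih₁, ih₂, raney, Nat.cast_add]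

theorem natCard_forest (m k : ℕ) : Nat.card (Forest d m k) = raney d m k :=
  congrArg ENat.toNat (enatCard_forest m k)

def equivForestOne (k : ℕ) : {t : DAryTree d // t.internal = k} ≃ Forest d 1 k :=
  ((Equiv.funUnique (Fin 1) (DAryTree d)).subtypeEquiv fun _ => by simp).symm

end DAryTree

/-- The number of rooted `d`-ary trees with `k` internal nodes is the
Fuss–Catalan number `C_k^{(d)} = (1/(k(d-1)+1)) * binomial (d*k) k`. -/
theorem dAryTree_count (d : ℕ) (hd : 2 ≤ d) (k : ℕ) :
    Nat.card {t : DAryTree d // t.internal = k}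
      = (d * k).choose k / (k * (d - 1) + 1) := by
  rw [Nat.card_congr (DAryTree.equivForestOne k), DAryTree.natCard_forest,
    ← raney_one_mul_eq_choose (by omega) k, Nat.mul_div_cancel _ (Nat.succ_pos _)]
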